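/- Let T be a first-order theory and S a set of closed terms such that for every atomic formula φ and every substitution of terms from S for all its free variables, the resulting sentence φ̄ satisfies T ⊢ φ̄ or T ⊢ ¬φ̄. Then the theory of all sentences derivable from T using the usual first-order rules together with the S-rule is complete: for every sentence σ, T ⊢_S σ or T ⊢_S ¬σ. -/

import Mathlib

open FirstOrder FirstOrder.Language Cardinal Set

universe u v w w2

/-- The universal closure `∀x φ(x)` of a formula in one free variable. -/
noncomputable def allClose {L : Language} (φ : L.Formula Unit) : L.Sentence :=
  Formula.iAlls Unit (φ.relabel (fun _ : Unit => (Sum.inr () : Empty ⊕ Unit)))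

/-- The existential closure `∃x φ(x)` of a formula in one free variable. -/
noncomputable def exClose {L : Language} (φ : L.Formula Unit) : L.Sentence :=
  Formula.iExs Unit (φ.relabel (fun _ : Unit => (Sum.inr () : Empty ⊕ Unit)))

/-- Substitution of a closed term for the unique free variable. -/
noncomputable def substC {L : Language} (φ : L.Formula Unit) (t : L.Term Empty) : L.Sentence :=
  φ.subst (fun _ => t)


/-- Provability generated by first-order provability (rendered, by Gödel completeness, as
semantic consequence `⊨ᵇ`) together with the `S`-rule. -/
inductive SProv (L : Language) (S : Set (L.Term Empty)) (T : L.Theory) : L.Sentence → Prop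
  | ax {σ} (h : σ ∈ T) : SProv L S T σ
  | fo (T' : L.Theory) (h : ∀ σ ∈ T', SProv L S T σ) {σ} (hσ : T' ⊨ᵇ σ) : SProv L S T σ
  | srule (φ : L.Formula Unit) (h : ∀ t ∈ S, SProv L S T (substC φ t)) :
      SProv L S T (allClose φ)

/-!
Substitute terms of `S` for all variables of a formula and induct on its structure: atomic
instances are decided by hypothesis, decidedness is preserved by implication, and for `∀x φ`
either some instance `φ(t)`, `t ∈ S`, is refuted, which refutes `∀x φ`, or all of them are
proved and the `S`-rule proves `∀x φ`.
-/

namespace FirstOrder.Language.BoundedFormula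

variable {L : FirstOrder.Language.{u, v}} {n : ℕ}

def toFinFormula (φ : L.BoundedFormula Empty n) : L.Formula (Fin n) :=
  φ.toFormula.relabel (Sum.elim Empty.elim id)

theorem realize_toFinFormula {M : Type*} [L.Structure M] (φ : L.BoundedFormula Empty n)
    (xs : Fin n → M) : φ.toFinFormula.Realize xs ↔ φ.Realize default xs := by
  rw [toFinFormula, Formula.realize_relabel, realize_toFormula]
  exact iff_of_eq (congrArg₂ _ (Subsingleton.elim _ _) rfl)

theorem IsAtomic.toFinFormula {φ : L.BoundedFormula Empty n} (h : φ.IsAtomic) :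
    φ.toFinFormula.IsAtomic := by
  cases h <;> exact IsAtomic.relabel (by constructor) _

end FirstOrder.Language.BoundedFormula

variable {L : FirstOrder.Language.{u, v}}

noncomputable def substInit {n : ℕ} (φ : L.Formula (Fin (n + 1))) (f : Fin n → L.Term Empty) :
    L.Formula Unit :=
  φ.subst (Fin.snoc (fun i => (f i).relabel Empty.elim) (Term.var ()))

section Realize

variable {M : Type*} [L.Structure M]

theorem realize_substC (φ : L.Formula Unit) (t : L.Term Empty) :
    M ⊨ substC φ t ↔ φ.Realize fun _ => t.realize (default : Empty → M) :=
  BoundedFormula.realize_subst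

theorem realize_allClose (φ : L.Formula Unit) :
    M ⊨ allClose φ ↔ ∀ x : M, φ.Realize fun _ => x := by
  rw [allClose, Sentence.Realize, Formula.realize_iAlls]
  simp only [Formula.realize_relabel]
  exact ⟨fun h x => h fun _ => x, fun h w => h (w ())⟩

theorem realize_substC_of_realize_allClose {φ : L.Formula Unit} (h : M ⊨ allClose φ)
    (t : L.Term Empty) : M ⊨ substC φ t :=
  (realize_substC φ t).2 ((realize_allClose φ).1 h _)

theorem realize_subst_toFinFormula {n : ℕ}
    (φ : L.BoundedFormula Empty n) (f : Fin n → L.Term Empty) :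
    M ⊨ φ.toFinFormula.subst f ↔ φ.Realize default fun i => (f i).realize (default : Empty → M) :=
  BoundedFormula.realize_subst.trans (BoundedFormula.realize_toFinFormula φ _)

theorem realize_substInit {n : ℕ} (φ : L.Formula (Fin (n + 1)))
    (f : Fin n → L.Term Empty) (x : M) :
    (substInit φ f).Realize (fun _ => x) ↔
      φ.Realize (Fin.snoc (fun i => (f i).realize default) x) := by
  rw [substInit, Formula.Realize, BoundedFormula.realize_subst]
  refine iff_of_eq (congrArg₂ _ (funext fun i => ?_) rfl)
  refine Fin.lastCases ?_ (fun j => ?_) i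
  · simp
  · simp only [Fin.snoc_castSucc, Term.realize_relabel]
    exact congrArg (f j).realize (Subsingleton.elim _ _)

end Realize

namespace SProv

variable {S : Set (L.Term Empty)} {T : L.Theory} {σ τ ρ : L.Sentence}

theorem of_models (h : T ⊨ᵇ σ) : SProv L S T σ :=
  fo T (fun _ => ax) h

theorem of_realize_imp (hσ : SProv L S T σ)
    (h : ∀ (M : Type (max u v)) [L.Structure M] [Nonempty M], M ⊨ σ → M ⊨ τ) :
    SProv L S T τ :=
  fo {σ} (by simpa using hσ) <| Theory.models_sentence_iff.2 fun M =>
    h M (Theory.realize_sentence_of_mem {σ} rfl)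

theorem of_realize_imp₂ (hσ : SProv L S T σ) (hτ : SProv L S T τ)
    (h : ∀ (M : Type (max u v)) [L.Structure M] [Nonempty M], M ⊨ σ → M ⊨ τ → M ⊨ ρ) :
    SProv L S T ρ :=
  fo {σ, τ} (by simp [hσ, hτ]) <| Theory.models_sentence_iff.2 fun M =>
    h M (Theory.realize_sentence_of_mem {σ, τ} (by simp))
      (Theory.realize_sentence_of_mem {σ, τ} (by simp))

end SProv

variable (L) in
def SDecides (S : Set (L.Term Empty)) (T : L.Theory) (σ : L.Sentence) : Prop :=
  SProv L S T σ ∨ SProv L S T σ.not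

namespace SDecides

variable {S : Set (L.Term Empty)} {T : L.Theory} {σ τ : L.Sentence}

theorem of_models (h : T ⊨ᵇ σ ∨ T ⊨ᵇ σ.not) : SDecides L S T σ :=
  h.imp SProv.of_models SProv.of_models

theorem of_iff (h : SDecides L S T σ)
    (e : ∀ (M : Type (max u v)) [L.Structure M] [Nonempty M], M ⊨ σ ↔ M ⊨ τ) :
    SDecides L S T τ :=
  h.imp (·.of_realize_imp fun M _ _ => (e M).1)
    (·.of_realize_imp fun M _ _ => by simpa only [Sentence.realize_not, e M] using id)

theorem falsum : SDecides L S T ⊥ :=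
  .inr <| SProv.of_models <| Theory.models_sentence_iff.2 fun _ => by
    simp [Sentence.Realize]

theorem imp (hσ : SDecides L S T σ) (hτ : SDecides L S T τ) : SDecides L S T (σ.imp τ) := by
  rcases hτ with hτ | hτ
  · exact .inl (hτ.of_realize_imp fun M _ _ h _ => h)
  rcases hσ with hσ | hσ
  · exact .inr (hσ.of_realize_imp₂ hτ fun M _ _ h₁ h₂ =>
      (Sentence.realize_not M).2 fun h => (Sentence.realize_not M).1 h₂ (h h₁))
  · exact .inl (hσ.of_realize_imp fun M _ _ h h' => absurd h' ((Sentence.realize_not M).1 h))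

theorem allClose {φ : L.Formula Unit} (h : ∀ t ∈ S, SDecides L S T (substC φ t)) :
    SDecides L S T (allClose φ) := by
  by_cases hcounter : ∃ t ∈ S, SProv L S T (substC φ t).not
  · obtain ⟨t, -, ht⟩ := hcounter
    exact .inr (ht.of_realize_imp fun M _ _ h => (Sentence.realize_not M).2 fun h' =>
      (Sentence.realize_not M).1 h (realize_substC_of_realize_allClose h' t))
  · push Not at hcounter
    exact .inl (.srule φ fun t ht => (h t ht).resolve_right (hcounter t ht))

end SDecides

open BoundedFormula in
theorem sDecides_subst_toFinFormula {S : Set (L.Term Empty)} {T : L.Theory}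
    (hatom : ∀ (n : ℕ) (φ : L.Formula (Fin n)), φ.IsAtomic →
      ∀ f : Fin n → L.Term Empty, (∀ i, f i ∈ S) →
        T ⊨ᵇ φ.subst f ∨ T ⊨ᵇ (φ.subst f).not)
    {n : ℕ} (φ : L.BoundedFormula Empty n) (f : Fin n → L.Term Empty) (hf : ∀ i, f i ∈ S) :
    SDecides L S T (φ.toFinFormula.subst f) := by
  induction φ with
  | falsum =>
    exact SDecides.falsum.of_iff fun M _ _ => by
      rw [realize_subst_toFinFormula]
      exact Iff.rfl
  | equal t₁ t₂ => exact .of_models (hatom _ _ (IsAtomic.equal t₁ t₂).toFinFormula f hf)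
  | rel R ts => exact .of_models (hatom _ _ (IsAtomic.rel R ts).toFinFormula f hf)
  | imp φ₁ φ₂ ih₁ ih₂ =>
    exact ((ih₁ f hf).imp (ih₂ f hf)).of_iff fun M _ _ => by
      simp only [Sentence.realize_imp, realize_subst_toFinFormula, realize_imp]
  | all ψ ih =>
    have hinst (t : L.Term Empty) (ht : t ∈ S) :
        SDecides L S T (substC (substInit ψ.toFinFormula f) t) := by
      have hsnoc (i : Fin (_ + 1)) : Fin.snoc (α := fun _ => L.Term Empty) f t i ∈ S :=
        Fin.lastCases (by simpa using ht) (by simpa using hf) i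
      refine (ih (Fin.snoc f t) hsnoc).of_iff fun M _ _ => ?_
      rw [realize_substC, realize_substInit, realize_subst_toFinFormula, realize_toFinFormula]
      exact iff_of_eq (congrArg _ (Fin.comp_snoc _ f t))
    refine (SDecides.allClose hinst).of_iff fun M _ _ => ?_
    simp only [realize_allClose, realize_substInit, realize_subst_toFinFormula, realize_all,
      realize_toFinFormula]

/-- Syntactic completeness: if T decides all substitution instances (by terms of S)
of atomic formulas, then the theory [T, ⊢_S] is complete. -/
theorem stmt_3 {L : FirstOrder.Language.{u, v}} (T : L.Theory) (S : Set (L.Term Empty))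
    (hatom : ∀ (n : ℕ) (φ : L.Formula (Fin n)), φ.IsAtomic →
      ∀ f : Fin n → L.Term Empty, (∀ i, f i ∈ S) →
        T ⊨ᵇ φ.subst f ∨ T ⊨ᵇ (φ.subst f).not) :
    ∀ σ : L.Sentence, SProv L S T σ ∨ SProv L S T σ.not := by
  intro σ
  refine (sDecides_subst_toFinFormula hatom σ finZeroElim finZeroElim).of_iff fun M _ _ => ?_
  rw [realize_subst_toFinFormula]
  exact iff_of_eq (congrArg _ (Subsingleton.elim _ _))
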